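/- (Buekenhout–Hermand) Suppose the type set I is finite and let Γ = Γ(G, (G_i)_{i∈I}) be a coset geometry over I on which G acts flag-transitively. Then Γ is residually connected if and only if G_J = ⟨G_{J∪{i}} : i ∈ I ∖ J⟩ for every J ⊆ I with |I ∖ J| ≥ 2. -/

import Mathlib

open scoped Pointwise

namespace ChiralGeom

/-- An incidence system `(X, *, t, I)`: a set of elements `X`, a type function `t : X → I`,
and a reflexive symmetric incidence relation such that distinct elements of the same type
are never incident. -/
structure IncidenceSystem (X : Type*) (I : Type*) where
  t : X → I
  inc : X → X → Prop
  inc_refl : ∀ x, inc x x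
  inc_symm : ∀ x y, inc x y → inc y x
  eq_of_inc_of_t_eq : ∀ x y, inc x y → t x = t y → x = y

namespace IncidenceSystem

variable {X I : Type*} (Γ : IncidenceSystem X I)

/-- A flag is a set of pairwise incident elements. -/
def IsFlag (F : Set X) : Prop := ∀ x ∈ F, ∀ y ∈ F, Γ.inc x y

/-- A chamber is a flag of type `I` (containing elements of every type). -/
def IsChamber (C : Set X) : Prop := Γ.IsFlag C ∧ Γ.t '' C = Set.univ

/-- `Γ` is a geometry when every flag is contained in a chamber. -/
def IsGeometry : Prop := ∀ F : Set X, Γ.IsFlag F → ∃ C : Set X, Γ.IsChamber C ∧ F ⊆ C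

/-- The elements of the residue of a flag `F`: elements not in `F` incident to
every element of `F`. -/
def ResidueElt (F : Set X) : Type _ := {x : X // x ∉ F ∧ ∀ y ∈ F, Γ.inc x y}

/-- The residue of a flag `F`, an incidence system over `I ∖ t(F)`. -/
def residue (F : Set X) : IncidenceSystem (Γ.ResidueElt F) {i : I // i ∉ Γ.t '' F} where
  t x := ⟨Γ.t x.1, by
    rintro ⟨y, hy, hty⟩
    exact x.2.1 (by
      rw [Γ.eq_of_inc_of_t_eq x.1 y (x.2.2 y hy) hty.symm]; exact hy)⟩
  inc x y := Γ.inc x.1 y.1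
  inc_refl x := Γ.inc_refl x.1
  inc_symm x y h := Γ.inc_symm _ _ h
  eq_of_inc_of_t_eq x y h ht :=
    Subtype.ext (Γ.eq_of_inc_of_t_eq _ _ h (congrArg Subtype.val ht))

/-- `Γ` is connected when its incidence graph is connected. -/
def Connected : Prop := ∀ x y : X, Relation.ReflTransGen Γ.inc x y

/-- `Γ` is residually connected when every residue of rank at least two
(including `Γ` itself, the residue of the empty flag) is connected. -/
def ResiduallyConnected : Prop :=
  ∀ F : Set X, Γ.IsFlag F → ({i : I | i ∉ Γ.t '' F}).Nontrivial → (Γ.residue F).Connected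

/-- `Γ` is firm when every residue of rank one has at least two elements. -/
def IsFirm : Prop :=
  ∀ F : Set X, Γ.IsFlag F → (∃ i : I, {i' : I | i' ∉ Γ.t '' F} = {i}) →
    ∃ x y : Γ.ResidueElt F, x ≠ y

/-- `Γ` is thin when every residue of rank one has exactly two elements. -/
def IsThin : Prop :=
  ∀ F : Set X, Γ.IsFlag F → (∃ i : I, {i' : I | i' ∉ Γ.t '' F} = {i}) →
    ∃ x y : Γ.ResidueElt F, x ≠ y ∧ ∀ z : Γ.ResidueElt F, z = x ∨ z = y

/-- A type-preserving automorphism: a permutation of the elements preserving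
incidence and types. -/
def IsAut (e : Equiv.Perm X) : Prop :=
  (∀ x y, Γ.inc x y ↔ Γ.inc (e x) (e y)) ∧ ∀ x, Γ.t (e x) = Γ.t x

/-- Two sets of elements (e.g. chambers) in the same orbit of `Aut_I(Γ)`. -/
def SameOrbit (C C' : Set X) : Prop := ∃ e : Equiv.Perm X, Γ.IsAut e ∧ e '' C = C'

/-- Two chambers are adjacent when they differ in exactly one element. -/
def Adjacent (C C' : Set X) : Prop :=
  Γ.IsChamber C ∧ Γ.IsChamber C' ∧
    ∃ x ∈ C, ∃ y ∈ C', x ≠ y ∧ C \ {x} = C' \ {y}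

/-- `Γ` is chiral when `Aut_I(Γ)` has exactly two orbits on chambers,
and adjacent chambers always lie in distinct orbits. -/
def IsChiral : Prop :=
  (∃ C₁ C₂ : Set X, Γ.IsChamber C₁ ∧ Γ.IsChamber C₂ ∧ ¬ Γ.SameOrbit C₁ C₂ ∧
      ∀ C : Set X, Γ.IsChamber C → Γ.SameOrbit C₁ C ∨ Γ.SameOrbit C₂ C) ∧
  ∀ C C' : Set X, Γ.Adjacent C C' → ¬ Γ.SameOrbit C C'

end IncidenceSystem

section Coset

variable {G : Type*} [Group G] {ι : Type*}

/-- The elements of the coset incidence system: pairs `(i, S)` where `S` is a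
(left) coset `g Gᵢ`. -/
abbrev CosetElt (Gs : ι → Subgroup G) : Type _ :=
  {p : ι × Set G // ∃ g : G, p.2 = ({g} : Set G) * (Gs p.1 : Set G)}

lemma mem_singleton_mul_self {H : Subgroup G} (a : G) : a ∈ ({a} : Set G) * (H : Set G) :=
  ⟨a, rfl, 1, H.one_mem, mul_one a⟩

lemma singleton_mul_subgroup_eq {H : Subgroup G} {a b : G}
    (h : ((({a} : Set G) * (H : Set G)) ∩ (({b} : Set G) * (H : Set G))).Nonempty) :
    ({a} : Set G) * (H : Set G) = ({b} : Set G) * (H : Set G) := by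
  obtain ⟨x, hx1, hx2⟩ := h
  obtain ⟨a', ha', h1, hh1, hxa⟩ := Set.mem_mul.mp hx1
  obtain ⟨b', hb', h2, hh2, hxb⟩ := Set.mem_mul.mp hx2
  clear hx1 hx2
  obtain rfl : a = a' := ha'.symm
  obtain rfl : b = b' := hb'.symm
  have key : a * h1 = b * h2 := hxa.trans hxb.symm
  have e1 : b⁻¹ * (a * h1) = h2 := by rw [key, inv_mul_cancel_left]
  have e : b⁻¹ * a = h2 * h1⁻¹ := by rw [← e1]; group
  have hba : b⁻¹ * a ∈ H := e ▸ H.mul_mem hh2 (H.inv_mem hh1)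
  ext y
  simp only [Set.mem_mul, Set.mem_singleton_iff, exists_eq_left]
  constructor
  · rintro ⟨z, hz, rfl⟩
    exact ⟨(b⁻¹ * a) * z, H.mul_mem hba hz, by group⟩
  · rintro ⟨z, hz, rfl⟩
    exact ⟨(a⁻¹ * b) * z, H.mul_mem (by simpa using H.inv_mem hba) hz, by group⟩

/-- The coset incidence system `Γ(G; (Gᵢ)_{i∈ι})` : elements are the cosets `g Gᵢ`,
the type of `g Gᵢ` is `i`, and two cosets are incident iff they meet. -/
def cosetSystem (Gs : ι → Subgroup G) : IncidenceSystem (CosetElt Gs) ι where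
  t p := p.1.1
  inc p q := (p.1.2 ∩ q.1.2).Nonempty
  inc_refl p := by
    obtain ⟨g, hg⟩ := p.2
    exact ⟨g, by rw [Set.inter_self, hg]; exact mem_singleton_mul_self g⟩
  inc_symm p q h := by
    obtain ⟨x, hx1, hx2⟩ := h
    exact ⟨x, hx2, hx1⟩
  eq_of_inc_of_t_eq p q h ht := by
    obtain ⟨a, ha⟩ := p.2
    obtain ⟨b, hb⟩ := q.2
    have ht' : p.1.1 = q.1.1 := ht
    apply Subtype.ext
    apply Prod.ext ht'
    show p.1.2 = q.1.2
    have hb2 : q.1.2 = ({b} : Set G) * (Gs p.1.1 : Set G) := by rw [hb, ht']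
    rw [ha, hb2]
    apply singleton_mul_subgroup_eq
    rw [← ha, ← hb2]
    exact h

/-- The coset `g Gᵢ` as an element of the coset incidence system. -/
def mkElt (Gs : ι → Subgroup G) (i : ι) (g : G) : CosetElt Gs :=
  ⟨(i, ({g} : Set G) * (Gs i : Set G)), ⟨g, rfl⟩⟩

/-- The identity coset `Gᵢ` as an element of the coset incidence system. -/
def idElt (Gs : ι → Subgroup G) (i : ι) : CosetElt Gs :=
  ⟨(i, (Gs i : Set G)), ⟨1, by rw [Set.singleton_one, one_mul]⟩⟩

/-- The action of `g ∈ G` on the coset incidence system by multiplication. -/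
def actElt (Gs : ι → Subgroup G) (g : G) (x : CosetElt Gs) : CosetElt Gs :=
  ⟨(x.1.1, ({g} : Set G) * x.1.2), by
    obtain ⟨a, ha⟩ := x.2
    exact ⟨g * a, by rw [ha, ← mul_assoc, Set.singleton_mul_singleton]⟩⟩

/-- `G` is transitive on the set of flags of type `J` of the coset incidence system. -/
def flagTransitiveOn (Gs : ι → Subgroup G) (J : Set ι) : Prop :=
  ∀ F F' : Set (CosetElt Gs), (cosetSystem Gs).IsFlag F → (cosetSystem Gs).IsFlag F' →
    (cosetSystem Gs).t '' F = J → (cosetSystem Gs).t '' F' = J →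
    ∃ g : G, (actElt Gs g) '' F = F'

/-- The parabolic subgroup `G_J := ⋂_{j ∈ J} G_j`. -/
def interSub (Gs : ι → Subgroup G) (J : Set ι) : Subgroup G := ⨅ j ∈ J, Gs j

/-- The flag `{G_j : j ∈ J}` of identity cosets. -/
def baseFlag (Gs : ι → Subgroup G) (J : Set ι) : Set (CosetElt Gs) :=
  {x | ∃ j ∈ J, x = idElt Gs j}

/-- The family of subgroups `(G_{J ∪ {i}})_{i ∈ I ∖ J}` of `G_J`. -/
def resFamily (Gs : ι → Subgroup G) (J : Set ι) :
    {i : ι // i ∉ J} → Subgroup (interSub Gs J) :=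
  fun i => (interSub Gs (insert i.1 J)).subgroupOf (interSub Gs J)

lemma interSub_le {Gs : ι → Subgroup G} {J : Set ι} {j : ι} (hj : j ∈ J) :
    interSub Gs J ≤ Gs j := by
  intro x hx
  simp only [interSub, Subgroup.mem_iInf] at hx
  exact hx j hj

/-- The canonical homomorphism `φ_J` from the coset incidence system
`Γ(G_J, (G_{J∪{i}})_{i ∈ I∖J})` to the residue of the flag `{G_j : j ∈ J}`,
given by `φ_J (a G_{J∪{i}}) = a G_i` for `a ∈ G_J`. -/
noncomputable def phi (Gs : ι → Subgroup G) (J : Set ι)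
    (x : CosetElt (resFamily Gs J)) :
    (cosetSystem Gs).ResidueElt (baseFlag Gs J) :=
  ⟨mkElt Gs x.1.1.1 (x.2.choose : G), by
    constructor
    · rintro ⟨j, hj, hEq⟩
      have : x.1.1.1 = j := congrArg (fun y : CosetElt Gs => y.1.1) hEq
      exact x.1.1.2 (this ▸ hj)
    · rintro y ⟨j, hj, rfl⟩
      refine ⟨(x.2.choose : G), mem_singleton_mul_self _, ?_⟩
      exact interSub_le hj (x.2.choose).2⟩

end Coset

section CPlus

variable {G : Type*} [Group G]

/-- The subgroup `G⁺_J := ⟨α_i⁻¹ α_j : i, j ∈ J⟩`. -/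
def GJc (α : ℕ → G) (J : Set ℕ) : Subgroup G :=
  Subgroup.closure {g | ∃ i ∈ J, ∃ j ∈ J, g = (α i)⁻¹ * α j}

/-- `(G, {α_1, …, α_{r-1}})` is a C⁺-group: `α_0 = 1`, the `α_j` (`1 ≤ j ≤ r-1`)
generate `G`, and the intersection condition IC⁺ holds. -/
def IsCPlusGroup (r : ℕ) (α : ℕ → G) : Prop :=
  α 0 = 1 ∧
  Subgroup.closure {g | ∃ j : ℕ, 1 ≤ j ∧ j < r ∧ g = α j} = ⊤ ∧
  ∀ J K : Set ℕ, J ⊆ Set.Iio r → K ⊆ Set.Iio r → J.Nontrivial → K.Nontrivial →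
    GJc α J ⊓ GJc α K = GJc α (J ∩ K)

/-- The maximal parabolic subgroups: `G₀⁺ = ⟨α_1⁻¹ α_j : j ≥ 2⟩` and
`G_i⁺ = ⟨α_j : j ≠ i⟩` for `i ≥ 1`. -/
def maxParab (r : ℕ) (α : ℕ → G) (i : ℕ) : Subgroup G :=
  if i = 0 then Subgroup.closure {g | ∃ j : ℕ, 2 ≤ j ∧ j < r ∧ g = (α 1)⁻¹ * α j}
  else Subgroup.closure {g | ∃ j : ℕ, 1 ≤ j ∧ j < r ∧ j ≠ i ∧ g = α j}

/-- The family `(G_i⁺)_{i ∈ {0,…,r-1}}` of maximal parabolic subgroups of a C⁺-group. -/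
def cplusFamily (r : ℕ) (α : ℕ → G) : Fin r → Subgroup G := fun i => maxParab r α i.1

end CPlus


/-!
Flag-transitivity makes every flag a translate `g • {G_k : k ∈ K}` of the base flag of its
type, and a flag containing `F_J = {G_j : j ∈ J}` such a translate with `g ∈ G_J`. Hence the
residue of `F_J` consists of the cosets `a G_i` with `a ∈ G_J`, `i ∉ J`, and
`G_J ∩ G_i G_k ⊆ G_{J∪{i}} G_{J∪{k}}`. Along a path in the residue starting at `G_i`, this
inclusion shows that every coset reached is `a G_k` with `a ∈ H = ⟨G_{J∪{i}} : i ∉ J⟩`, so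
connectedness forces `G_J = H`. Conversely, a generator `x ∈ G_{J∪{k}}` joins `x G_i` to `G_i`
through `G_k`, the base cosets are pairwise incident and `G_J` acts on the residue, so
`G_J = H` joins every `a G_i` to the base cosets. Residues of other flags of type `J` are
translates of that of `F_J`.
-/

namespace IncidenceSystem

variable {X I : Type*} {Γ : IncidenceSystem X I}

instance (Γ : IncidenceSystem X I) : Std.Symm Γ.inc := ⟨Γ.inc_symm⟩

lemma IsFlag.eq_of_t_eq {F : Set X} (hF : Γ.IsFlag F) {x y : X} (hx : x ∈ F) (hy : y ∈ F)
    (h : Γ.t x = Γ.t y) : x = y :=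
  Γ.eq_of_inc_of_t_eq x y (hF x hx y hy) h

lemma IsFlag.insert {F : Set X} (hF : Γ.IsFlag F) {x : X} (hx : ∀ y ∈ F, Γ.inc x y) :
    Γ.IsFlag (insert x F) := by
  rintro u (rfl | hu) v (rfl | hv)
  exacts [Γ.inc_refl _, hx v hv, Γ.inc_symm _ _ (hx u hu), hF u hu v hv]

lemma IsFlag.subset_of_image_t_subset {C A B : Set X} (hC : Γ.IsFlag C) (hA : A ⊆ C)
    (hB : B ⊆ C) (h : Γ.t '' A ⊆ Γ.t '' B) : A ⊆ B := by
  intro x hx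
  obtain ⟨y, hy, hxy⟩ := h ⟨x, hx, rfl⟩
  rwa [hC.eq_of_t_eq (hA hx) (hB hy) hxy.symm]

lemma IsFlag.eq_of_image_t_eq {C A B : Set X} (hC : Γ.IsFlag C) (hA : A ⊆ C) (hB : B ⊆ C)
    (h : Γ.t '' A = Γ.t '' B) : A = B :=
  (hC.subset_of_image_t_subset hA hB h.le).antisymm (hC.subset_of_image_t_subset hB hA h.ge)

lemma Connected.of_surjective {Y I' : Type*} {Γ' : IncidenceSystem Y I'} (hΓ : Γ.Connected)
    {f : X → Y} (hf : Function.Surjective f) (hinc : ∀ x y, Γ.inc x y → Γ'.inc (f x) (f y)) :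
    Γ'.Connected := by
  intro u v
  obtain ⟨x, rfl⟩ := hf u
  obtain ⟨y, rfl⟩ := hf v
  exact Relation.ReflTransGen.lift f hinc x y (hΓ x y)

lemma Connected.induction_on (hΓ : Γ.Connected) {P : X → Prop} {x : X} (hx : P x)
    (hstep : ∀ y z, Γ.inc y z → P y → P z) (y : X) : P y := by
  induction hΓ x y with
  | refl => exact hx
  | tail _ hyz ih => exact hstep _ _ hyz ih

lemma IsAut.symm {e : Equiv.Perm X} (he : Γ.IsAut e) : Γ.IsAut e.symm :=
  ⟨fun x y => by simpa using (he.1 (e.symm x) (e.symm y)).symm,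
    fun x => by simpa using (he.2 (e.symm x)).symm⟩

def IsAut.residueMap {e : Equiv.Perm X} (he : Γ.IsAut e) {F F' : Set X} (hF : e '' F = F')
    (x : Γ.ResidueElt F) : Γ.ResidueElt F' :=
  ⟨e x.1, fun h => x.2.1 (by rwa [← hF, e.injective.mem_set_image] at h), by
    rw [← hF]
    rintro _ ⟨y, hy, rfl⟩
    exact (he.1 _ _).1 (x.2.2 y hy)⟩

lemma IsAut.residueMap_inc {e : Equiv.Perm X} (he : Γ.IsAut e) {F F' : Set X}
    (hF : e '' F = F') {x y : Γ.ResidueElt F} (h : (Γ.residue F).inc x y) :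
    (Γ.residue F').inc (he.residueMap hF x) (he.residueMap hF y) :=
  (he.1 _ _).1 h

lemma IsAut.residueMap_surjective {e : Equiv.Perm X} (he : Γ.IsAut e) {F F' : Set X}
    (hF : e '' F = F') : Function.Surjective (he.residueMap hF) := by
  have hF' : e.symm '' F' = F := by rw [← hF, Equiv.symm_image_image]
  exact fun x => ⟨he.symm.residueMap hF' x, Subtype.ext (e.apply_symm_apply x.1)⟩

lemma IsAut.connected_residue {e : Equiv.Perm X} (he : Γ.IsAut e) {F F' : Set X}
    (hF : e '' F = F') (hconn : (Γ.residue F).Connected) : (Γ.residue F').Connected :=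
  hconn.of_surjective (he.residueMap_surjective hF) fun _ _ => he.residueMap_inc hF

end IncidenceSystem

section Coset

variable {G : Type*} [Group G] {ι : Type*} {Gs : ι → Subgroup G}

lemma mkElt_eq_mkElt_iff {i : ι} {a b : G} :
    mkElt Gs i a = mkElt Gs i b ↔ a⁻¹ * b ∈ Gs i := by
  simp only [mkElt, Subtype.mk.injEq, Prod.mk.injEq, true_and, Set.singleton_mul]
  exact leftCoset_eq_iff (Gs i)

lemma exists_eq_mkElt (x : CosetElt Gs) : ∃ i a, x = mkElt Gs i a := by
  obtain ⟨⟨i, S⟩, a, h⟩ := x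
  exact ⟨i, a, Subtype.ext (Prod.ext rfl h)⟩

lemma idElt_eq_mkElt_one (i : ι) : idElt Gs i = mkElt Gs i 1 := by
  simp [idElt, mkElt]

lemma actElt_mkElt (g : G) (i : ι) (a : G) :
    actElt Gs g (mkElt Gs i a) = mkElt Gs i (g * a) := by
  simp only [actElt, mkElt, ← mul_assoc, Set.singleton_mul_singleton]

lemma actElt_idElt (g : G) (i : ι) : actElt Gs g (idElt Gs i) = mkElt Gs i g := by
  rw [idElt_eq_mkElt_one, actElt_mkElt, mul_one]

lemma inc_mkElt_iff {i k : ι} {a b : G} :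
    (cosetSystem Gs).inc (mkElt Gs i a) (mkElt Gs k b) ↔ a⁻¹ * b ∈ (Gs i : Set G) * Gs k := by
  show (({a} * (Gs i : Set G)) ∩ ({b} * Gs k)).Nonempty ↔ _
  simp only [Set.singleton_mul, Set.image_mul_left]
  constructor
  · rintro ⟨w, hwa, hwb⟩
    exact ⟨a⁻¹ * w, hwa, (b⁻¹ * w)⁻¹, inv_mem hwb, by group⟩
  · rintro ⟨x, hx, y, hy, hxy⟩
    have hb : b = a * (x * y) := by rw [show x * y = a⁻¹ * b from hxy, mul_inv_cancel_left]
    exact ⟨a * x, by simpa using hx, by simpa [hb, mul_assoc] using inv_mem hy⟩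

lemma mkElt_inc_mkElt_one {i j : ι} {a : G} (ha : a ∈ Gs j) :
    (cosetSystem Gs).inc (mkElt Gs i a) (mkElt Gs j 1) :=
  inc_mkElt_iff.2 ⟨1, one_mem _, a⁻¹, inv_mem ha, by group⟩

lemma actElt_inc_actElt_iff {g : G} {x y : CosetElt Gs} :
    (cosetSystem Gs).inc (actElt Gs g x) (actElt Gs g y) ↔ (cosetSystem Gs).inc x y := by
  obtain ⟨i, a, rfl⟩ := exists_eq_mkElt x
  obtain ⟨k, b, rfl⟩ := exists_eq_mkElt y
  rw [actElt_mkElt, actElt_mkElt, inc_mkElt_iff, inc_mkElt_iff, mul_inv_rev, mul_assoc,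
    inv_mul_cancel_left]

def actPerm (Gs : ι → Subgroup G) (g : G) : Equiv.Perm (CosetElt Gs) where
  toFun := actElt Gs g
  invFun := actElt Gs g⁻¹
  left_inv x := by
    obtain ⟨i, a, rfl⟩ := exists_eq_mkElt x
    rw [actElt_mkElt, actElt_mkElt, inv_mul_cancel_left]
  right_inv x := by
    obtain ⟨i, a, rfl⟩ := exists_eq_mkElt x
    rw [actElt_mkElt, actElt_mkElt, mul_inv_cancel_left]

lemma actPerm_apply (g : G) (x : CosetElt Gs) : actPerm Gs g x = actElt Gs g x := rfl

lemma isAut_actPerm (g : G) : (cosetSystem Gs).IsAut (actPerm Gs g) :=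
  ⟨fun _ _ => actElt_inc_actElt_iff.symm, fun _ => rfl⟩

lemma mem_interSub {J : Set ι} {a : G} : a ∈ interSub Gs J ↔ ∀ j ∈ J, a ∈ Gs j := by
  simp only [interSub, Subgroup.mem_iInf]

lemma interSub_insert (i : ι) (J : Set ι) : interSub Gs (insert i J) = Gs i ⊓ interSub Gs J :=
  iInf_insert

lemma interSub_insert_le (i : ι) (J : Set ι) : interSub Gs (insert i J) ≤ interSub Gs J := by
  rw [interSub_insert]
  exact inf_le_right

lemma iSup_interSub_insert_le (J : Set ι) :
    ⨆ i ∈ {i : ι | i ∉ J}, interSub Gs (insert i J) ≤ interSub Gs J :=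
  iSup₂_le fun i _ => interSub_insert_le i J

lemma interSub_insert_le_iSup {J : Set ι} {i : ι} (hi : i ∉ J) :
    interSub Gs (insert i J) ≤ ⨆ i ∈ {i : ι | i ∉ J}, interSub Gs (insert i J) :=
  le_iSup₂ (f := fun i (_ : i ∈ {i : ι | i ∉ J}) => interSub Gs (insert i J)) i hi

lemma baseFlag_eq_image (J : Set ι) : baseFlag Gs J = idElt Gs '' J := by
  ext x
  simp [baseFlag, eq_comm]

lemma t_image_baseFlag (J : Set ι) : (cosetSystem Gs).t '' baseFlag Gs J = J := by
  rw [baseFlag_eq_image, Set.image_image]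
  exact Set.image_id' J

lemma baseFlag_isFlag (J : Set ι) : (cosetSystem Gs).IsFlag (baseFlag Gs J) := by
  rintro _ ⟨i, -, rfl⟩ _ ⟨j, -, rfl⟩
  rw [idElt_eq_mkElt_one, idElt_eq_mkElt_one]
  exact mkElt_inc_mkElt_one (one_mem _)

lemma actPerm_image_baseFlag {J : Set ι} {g : G} (hg : g ∈ interSub Gs J) :
    actPerm Gs g '' baseFlag Gs J = baseFlag Gs J := by
  rw [baseFlag_eq_image, Set.image_image]
  refine Set.image_congr fun j hj => ?_
  rw [actPerm_apply, actElt_idElt, idElt_eq_mkElt_one, mkElt_eq_mkElt_iff, mul_one]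
  exact inv_mem (mem_interSub.1 hg j hj)

end Coset

section FlagTransitive

variable {G : Type*} [Group G] {ι : Type*} {Gs : ι → Subgroup G}

lemma exists_actElt_image_baseFlag (hgeo : (cosetSystem Gs).IsGeometry)
    (hft : flagTransitiveOn Gs Set.univ) {F : Set (CosetElt Gs)}
    (hF : (cosetSystem Gs).IsFlag F) :
    ∃ g : G, actElt Gs g '' baseFlag Gs ((cosetSystem Gs).t '' F) = F := by
  obtain ⟨C, hC, hbase⟩ := hgeo _ (baseFlag_isFlag ((cosetSystem Gs).t '' F))
  obtain ⟨C', hC', hFC'⟩ := hgeo F hF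
  obtain ⟨g, hg⟩ := hft C C' hC.1 hC'.1 hC.2 hC'.2
  refine ⟨g, hC'.1.eq_of_image_t_eq (hg ▸ Set.image_mono hbase) hFC' ?_⟩
  rw [Set.image_image]
  exact t_image_baseFlag _

lemma exists_mem_interSub_eq_mkElt (hgeo : (cosetSystem Gs).IsGeometry)
    (hft : flagTransitiveOn Gs Set.univ) {J : Set ι} {F : Set (CosetElt Gs)}
    (hF : (cosetSystem Gs).IsFlag F) (hJ : baseFlag Gs J ⊆ F) :
    ∃ g ∈ interSub Gs J, ∀ x ∈ F, x = mkElt Gs ((cosetSystem Gs).t x) g := by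
  obtain ⟨g, hg⟩ := exists_actElt_image_baseFlag hgeo hft hF
  have hgF : ∀ x ∈ F, x = mkElt Gs ((cosetSystem Gs).t x) g := by
    rw [← hg, baseFlag_eq_image, Set.image_image]
    rintro _ ⟨k, -, rfl⟩
    exact actElt_idElt g k
  refine ⟨g, mem_interSub.2 fun j hj => ?_, hgF⟩
  have hj : idElt Gs j = mkElt Gs j g := hgF _ (hJ ⟨j, hj, rfl⟩)
  rwa [idElt_eq_mkElt_one, mkElt_eq_mkElt_iff, inv_one, one_mul] at hj

def residueCoset (J : Set ι) {i : ι} (hi : i ∉ J) {a : G} (ha : a ∈ interSub Gs J) :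
    (cosetSystem Gs).ResidueElt (baseFlag Gs J) :=
  ⟨mkElt Gs i a, fun ⟨j, hj, h⟩ => hi (by rwa [show i = j from congrArg (fun x => x.1.1) h]), by
    rintro _ ⟨j, hj, rfl⟩
    rw [idElt_eq_mkElt_one]
    exact mkElt_inc_mkElt_one (mem_interSub.1 ha j hj)⟩

lemma t_notMem_of_residueElt {J : Set ι} (x : (cosetSystem Gs).ResidueElt (baseFlag Gs J)) :
    (cosetSystem Gs).t x.1 ∉ J := by
  have hx : (cosetSystem Gs).t x.1 ∉ (cosetSystem Gs).t '' baseFlag Gs J :=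
    (((cosetSystem Gs).residue (baseFlag Gs J)).t x).2
  rwa [t_image_baseFlag] at hx

lemma exists_eq_residueCoset (hgeo : (cosetSystem Gs).IsGeometry)
    (hft : flagTransitiveOn Gs Set.univ) {J : Set ι}
    (x : (cosetSystem Gs).ResidueElt (baseFlag Gs J)) :
    ∃ i, ∃ hi : i ∉ J, ∃ a, ∃ ha : a ∈ interSub Gs J, x = residueCoset J hi ha := by
  obtain ⟨g, hg, hgx⟩ := exists_mem_interSub_eq_mkElt hgeo hft
    ((baseFlag_isFlag J).insert x.2.2) (Set.subset_insert _ _)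
  exact ⟨_, t_notMem_of_residueElt x, g, hg, Subtype.ext (hgx _ (Set.mem_insert _ _))⟩

lemma interSub_inter_mul_subset (hgeo : (cosetSystem Gs).IsGeometry)
    (hft : flagTransitiveOn Gs Set.univ) (J : Set ι) (i k : ι) :
    (interSub Gs J : Set G) ∩ ((Gs i : Set G) * Gs k) ⊆
      (interSub Gs (insert i J) : Set G) * interSub Gs (insert k J) := by
  rintro c ⟨hcJ, hcik⟩
  have hF : (cosetSystem Gs).IsFlag (insert (mkElt Gs k c) (baseFlag Gs (insert i J))) := by
    refine (baseFlag_isFlag _).insert ?_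
    rintro _ ⟨l, rfl | hl, rfl⟩
    · rw [idElt_eq_mkElt_one]
      exact (cosetSystem Gs).inc_symm _ _ (inc_mkElt_iff.2 (by rwa [inv_one, one_mul]))
    · rw [idElt_eq_mkElt_one]
      exact mkElt_inc_mkElt_one (mem_interSub.1 hcJ l hl)
  -- `g` carries `G_i` to itself and `G_k` to `c G_k`
  obtain ⟨g, hg, hgF⟩ := exists_mem_interSub_eq_mkElt hgeo hft hF (Set.subset_insert _ _)
  have hgc : g⁻¹ * c ∈ Gs k := mkElt_eq_mkElt_iff.1 (hgF _ (Set.mem_insert _ _)).symm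
  refine ⟨g, hg, g⁻¹ * c, ?_, mul_inv_cancel_left g c⟩
  rw [interSub_insert]
  exact Subgroup.mem_inf.2 ⟨hgc, mul_mem (inv_mem (interSub_insert_le i J hg)) hcJ⟩

lemma residueMap_actPerm_residueCoset {J : Set ι} {g a : G} (hg : g ∈ interSub Gs J) {i : ι}
    (hi : i ∉ J) (ha : a ∈ interSub Gs J) :
    (isAut_actPerm g).residueMap (actPerm_image_baseFlag hg) (residueCoset J hi ha) =
      residueCoset J hi (mul_mem hg ha) :=
  Subtype.ext (actElt_mkElt g i a)

lemma interSub_le_iSup_of_connected (hgeo : (cosetSystem Gs).IsGeometry)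
    (hft : flagTransitiveOn Gs Set.univ) {J : Set ι} {i₀ : ι} (hi₀ : i₀ ∉ J)
    (hconn : ((cosetSystem Gs).residue (baseFlag Gs J)).Connected) :
    interSub Gs J ≤ ⨆ i ∈ {i : ι | i ∉ J}, interSub Gs (insert i J) := by
  set H := ⨆ i ∈ {i : ι | i ∉ J}, interSub Gs (insert i J)
  have hstep : ∀ x y : (cosetSystem Gs).ResidueElt (baseFlag Gs J),
      ((cosetSystem Gs).residue (baseFlag Gs J)).inc x y →
      (∃ a ∈ H, x.1 = mkElt Gs ((cosetSystem Gs).t x.1) a) →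
      ∃ b ∈ H, y.1 = mkElt Gs ((cosetSystem Gs).t y.1) b := by
    rintro x y hxy ⟨a, haH, hx⟩
    obtain ⟨k, hk, b, hb, rfl⟩ := exists_eq_residueCoset hgeo hft y
    have hinc : (cosetSystem Gs).inc x.1 (mkElt Gs k b) := hxy
    rw [hx, inc_mkElt_iff] at hinc
    obtain ⟨u, hu, v, hv, huv⟩ := Set.mem_mul.1 (interSub_inter_mul_subset hgeo hft J _ _
      ⟨mul_mem (inv_mem (iSup_interSub_insert_le J haH)) hb, hinc⟩)
    refine ⟨b, ?_, rfl⟩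
    rw [← mul_inv_cancel_left a b, ← huv]
    exact mul_mem haH (mul_mem (interSub_insert_le_iSup (t_notMem_of_residueElt x) hu)
      (interSub_insert_le_iSup hk hv))
  intro g hg
  obtain ⟨a, haH, ha⟩ := hconn.induction_on (x := residueCoset J hi₀ (one_mem _))
    ⟨1, one_mem _, rfl⟩ hstep (residueCoset J hi₀ hg)
  have hag : a⁻¹ * g ∈ interSub Gs (insert i₀ J) := by
    rw [interSub_insert]
    exact Subgroup.mem_inf.2 ⟨mkElt_eq_mkElt_iff.1 ha.symm,
      mul_mem (inv_mem (iSup_interSub_insert_le J haH)) hg⟩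
  rw [← mul_inv_cancel_left a g]
  exact mul_mem haH (interSub_insert_le_iSup hi₀ hag)

lemma residueCoset_one_inc {J : Set ι} {i k : ι} (hi : i ∉ J) (hk : k ∉ J) :
    ((cosetSystem Gs).residue (baseFlag Gs J)).inc
      (residueCoset J hi (one_mem _)) (residueCoset J hk (one_mem _)) :=
  mkElt_inc_mkElt_one (one_mem _)

lemma exists_reflTransGen_residueCoset_one {J : Set ι} {a : G}
    (ha : a ∈ ⨆ i ∈ {i : ι | i ∉ J}, interSub Gs (insert i J)) :
    ∃ haJ : a ∈ interSub Gs J, ∀ i (hi : i ∉ J),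
      Relation.ReflTransGen ((cosetSystem Gs).residue (baseFlag Gs J)).inc
        (residueCoset J hi haJ) (residueCoset J hi (one_mem _)) := by
  rw [iSup_subtype'] at ha
  induction ha using Subgroup.iSup_induction' with
  | hp k x hx =>
    refine ⟨interSub_insert_le _ _ hx, fun i hi => .head ?_ (.single (residueCoset_one_inc k.2 hi))⟩
    exact mkElt_inc_mkElt_one (mem_interSub.1 hx k.1 (Set.mem_insert _ _))
  | h1 => exact ⟨one_mem _, fun _ _ => .refl⟩
  | hmul x y _ _ ihx ihy =>
    obtain ⟨hx, px⟩ := ihx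
    obtain ⟨hy, py⟩ := ihy
    refine ⟨mul_mem hx hy, fun i hi => ?_⟩
    have hxy := Relation.ReflTransGen.lift
      ((isAut_actPerm x).residueMap (actPerm_image_baseFlag hx))
      (fun _ _ => (isAut_actPerm x).residueMap_inc _) _ _ (py i hi)
    rw [Function.onFun, residueMap_actPerm_residueCoset hx hi,
      residueMap_actPerm_residueCoset hx hi] at hxy
    simp only [mul_one] at hxy
    exact hxy.trans (px i hi)

lemma connected_residue_baseFlag (hgeo : (cosetSystem Gs).IsGeometry)
    (hft : flagTransitiveOn Gs Set.univ) {J : Set ι}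
    (hgen : interSub Gs J ≤ ⨆ i ∈ {i : ι | i ∉ J}, interSub Gs (insert i J)) :
    ((cosetSystem Gs).residue (baseFlag Gs J)).Connected := by
  intro u v
  obtain ⟨i, hi, a, ha, rfl⟩ := exists_eq_residueCoset hgeo hft u
  obtain ⟨k, hk, b, hb, rfl⟩ := exists_eq_residueCoset hgeo hft v
  obtain ⟨_, hpa⟩ := exists_reflTransGen_residueCoset_one (hgen ha)
  obtain ⟨_, hpb⟩ := exists_reflTransGen_residueCoset_one (hgen hb)
  exact (hpa i hi).trans (.head (residueCoset_one_inc hi hk) (Std.Symm.symm _ _ (hpb k hk)))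

end FlagTransitive

theorem buekenhout_hermand_residuallyConnected_iff_general
    {G ι : Type*} [Group G] (Gs : ι → Subgroup G)
    (hgeo : (cosetSystem Gs).IsGeometry)
    (hft : flagTransitiveOn Gs Set.univ) :
    (cosetSystem Gs).ResiduallyConnected ↔
      ∀ J : Set ι, ({i : ι | i ∉ J}).Nontrivial →
        interSub Gs J = ⨆ i ∈ {i : ι | i ∉ J}, interSub Gs (insert i J) := by
  constructor
  · intro hrc J hJ
    have hconn := hrc _ (baseFlag_isFlag J) (by rwa [t_image_baseFlag])
    exact (interSub_le_iSup_of_connected hgeo hft hJ.nonempty.some_mem hconn).antisymm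
      (iSup_interSub_insert_le J)
  · intro hgen F hF hJ
    obtain ⟨g, hg⟩ := exists_actElt_image_baseFlag hgeo hft hF
    exact (isAut_actPerm g).connected_residue hg
      (connected_residue_baseFlag hgeo hft (hgen _ hJ).le)

/-- (Buekenhout–Hermand) A flag-transitive coset geometry over a
finite type set is residually connected iff `G_J = ⟨G_{J∪{i}} : i ∈ I ∖ J⟩` for every
`J ⊆ I` with `|I ∖ J| ≥ 2`. -/
theorem buekenhout_hermand_residuallyConnected_iff
    {G ι : Type*} [Group G] [Finite ι] (Gs : ι → Subgroup G)
    (hgeo : (cosetSystem Gs).IsGeometry)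
    (hft : flagTransitiveOn Gs Set.univ) :
    (cosetSystem Gs).ResiduallyConnected ↔
      ∀ J : Set ι, ({i : ι | i ∉ J}).Nontrivial →
        interSub Gs J = ⨆ i ∈ {i : ι | i ∉ J}, interSub Gs (insert i J) :=
  buekenhout_hermand_residuallyConnected_iff_general Gs hgeo hft

end ChiralGeom
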